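/- arXiv:2208.02286 — 3 statements merged into one kernel-verified Lean document; each statement's English description precedes it below -/
import Mathlib

section
/- Let n ≥ 3, and let σ and θ be permutations of {1, …, n} such that d_iσ = d_iθ for all i ∈ {1, …, n}. Then σ = θ. -/
/-- The `i`-th face `d_iθ` of a permutation `θ` of `{1, …, n}`, in 0-based
indexing (so `Fin n` plays the role of `{1, …, n}` and the indices
`j ∈ {0, …, n-2}` play the role of `{1, …, n-1}`), given by the formula:
`d_iθ(j) = θ(j)` if `j < θ⁻¹(i)` and `θ(j) < i`; `d_iθ(j) = θ(j) − 1` if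
`j < θ⁻¹(i)` and `θ(j) > i`; `d_iθ(j) = θ(j+1)` if `j ≥ θ⁻¹(i)` and
`θ(j+1) < i`; `d_iθ(j) = θ(j+1) − 1` if `j ≥ θ⁻¹(i)` and `θ(j+1) > i`.
(Out-of-range arguments `j` with `j + 1 ≥ n` are sent to the junk value `0`.) -/
def dFaceFun (n : ℕ) (θ : Equiv.Perm (Fin n)) (i : Fin n) (j : ℕ) : ℕ :=
  if h : j + 1 < n then
    if j < ((θ.symm i : Fin n) : ℕ) then
      if ((θ ⟨j, by omega⟩ : Fin n) : ℕ) < (i : ℕ) then ((θ ⟨j, by omega⟩ : Fin n) : ℕ)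
      else ((θ ⟨j, by omega⟩ : Fin n) : ℕ) - 1
    else
      if ((θ ⟨j + 1, h⟩ : Fin n) : ℕ) < (i : ℕ) then ((θ ⟨j + 1, h⟩ : Fin n) : ℕ)
      else ((θ ⟨j + 1, h⟩ : Fin n) : ℕ) - 1
  else 0

set_option maxHeartbeats 1000000
set_option linter.unusedSectionVars false

section aux

variable {n : ℕ} [NeZero n]

lemma sym_inj (σ : Equiv.Perm (Fin n)) (k : ℕ) (hk : k < n) (v : Fin n)
    (h : σ ⟨k, hk⟩ = v) : k = ((σ.symm v : Fin n) : ℕ) := by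
  rw [← h, Equiv.symm_apply_apply]

lemma val_pos (σ : Equiv.Perm (Fin n)) (k : Fin n)
    (hne : (k : ℕ) ≠ ((σ.symm 0 : Fin n) : ℕ)) : 0 < ((σ k : Fin n) : ℕ) := by
  rcases Nat.eq_zero_or_pos ((σ k : Fin n) : ℕ) with h0 | h0
  · exfalso
    apply hne
    have hz : σ k = 0 := Fin.ext (by simpa using h0)
    have hk : k = σ.symm 0 := by rw [← hz, Equiv.symm_apply_apply]
    rw [hk]
  · exact h0

lemma face_zero_exist (σ : Equiv.Perm (Fin n)) (i : Fin n) (hi : 0 < (i : ℕ)) :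
    dFaceFun n σ i (if ((σ.symm 0 : Fin n) : ℕ) < ((σ.symm i : Fin n) : ℕ)
      then ((σ.symm 0 : Fin n) : ℕ) else ((σ.symm 0 : Fin n) : ℕ) - 1) = 0 := by
  set p := ((σ.symm 0 : Fin n) : ℕ) with hp
  set a := ((σ.symm i : Fin n) : ℕ) with ha
  have hp' : p < n := (σ.symm 0).isLt
  have ha' : a < n := (σ.symm i).isLt
  have hpa : p ≠ a := by
    intro hh
    have h2 : (0 : Fin n) = i := σ.symm.injective (Fin.ext hh)
    have : (i : ℕ) = 0 := by rw [← h2]; simp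
    omega
  have key : ∀ (k : ℕ) (hk : k < n), k = p → ((σ ⟨k, hk⟩ : Fin n) : ℕ) = 0 := by
    intro k hk hkp
    have hr : (⟨k, hk⟩ : Fin n) = σ.symm 0 := Fin.ext hkp
    rw [hr, Equiv.apply_symm_apply]
    simp
  by_cases hlt : p < a
  · rw [if_pos hlt]
    unfold dFaceFun
    rw [dif_pos (by omega : p + 1 < n), if_pos hlt, if_pos]
    · exact key p (by omega) rfl
    · rw [key p (by omega) rfl]; exact hi
  · rw [if_neg hlt]
    unfold dFaceFun
    rw [dif_pos (by omega : p - 1 + 1 < n), if_neg (by omega : ¬ p - 1 < a), if_pos]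
    · exact key (p - 1 + 1) (by omega) (by omega)
    · rw [key (p - 1 + 1) (by omega) (by omega)]; exact hi

lemma face_zero_unique (σ : Equiv.Perm (Fin n)) (i : Fin n) (hi : 0 < (i : ℕ))
    (j : ℕ) (hj : j + 1 < n) (h0 : dFaceFun n σ i j = 0) :
    j = (if ((σ.symm 0 : Fin n) : ℕ) < ((σ.symm i : Fin n) : ℕ)
      then ((σ.symm 0 : Fin n) : ℕ) else ((σ.symm 0 : Fin n) : ℕ) - 1) := by
  set p := ((σ.symm 0 : Fin n) : ℕ) with hp
  set a := ((σ.symm i : Fin n) : ℕ) with ha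
  unfold dFaceFun at h0
  rw [dif_pos hj] at h0
  by_cases hja : j < a
  · rw [if_pos hja] at h0
    by_cases hv : ((σ ⟨j, by omega⟩ : Fin n) : ℕ) < (i : ℕ)
    · rw [if_pos hv] at h0
      have hz : σ ⟨j, by omega⟩ = 0 := Fin.ext (by simpa using h0)
      have hjp : j = p := sym_inj σ j (by omega) 0 hz
      rw [if_pos (by omega : p < a)]; omega
    · rw [if_neg hv] at h0
      have hv1 : σ ⟨j, by omega⟩ = i := Fin.ext (by omega)
      have : j = a := sym_inj σ j (by omega) i hv1
      omega
  · rw [if_neg hja] at h0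
    by_cases hv : ((σ ⟨j + 1, hj⟩ : Fin n) : ℕ) < (i : ℕ)
    · rw [if_pos hv] at h0
      have hz : σ ⟨j + 1, hj⟩ = 0 := Fin.ext (by simpa using h0)
      have hjp : j + 1 = p := sym_inj σ (j + 1) hj 0 hz
      rw [if_neg (by omega : ¬ p < a)]; omega
    · rw [if_neg hv] at h0
      have hv1 : σ ⟨j + 1, hj⟩ = i := Fin.ext (by omega)
      have : j + 1 = a := sym_inj σ (j + 1) hj i hv1
      omega

lemma pos_not_lt (hn : 3 ≤ n) (σ θ : Equiv.Perm (Fin n))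
    (h : ∀ i : Fin n, ∀ j : ℕ, j < n - 1 → dFaceFun n σ i j = dFaceFun n θ i j) :
    ¬ ((σ.symm 0 : Fin n) : ℕ) < ((θ.symm 0 : Fin n) : ℕ) := by
  intro hlt
  set p := ((σ.symm 0 : Fin n) : ℕ) with hp
  set q := ((θ.symm 0 : Fin n) : ℕ) with hq
  have hp' : p < n := (σ.symm 0).isLt
  have hq' : q < n := (θ.symm 0).isLt
  have claim : ∀ i : Fin n, 0 < (i : ℕ) →
      p < ((σ.symm i : Fin n) : ℕ) ∧ ((θ.symm i : Fin n) : ℕ) < q ∧ q = p + 1 := by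
    intro i hi
    set a := ((σ.symm i : Fin n) : ℕ) with ha
    set b := ((θ.symm i : Fin n) : ℕ) with hb
    have ha' : a < n := (σ.symm i).isLt
    have hb' : b < n := (θ.symm i).isLt
    have hpa : p ≠ a := by
      intro hh
      have h2 : (0 : Fin n) = i := σ.symm.injective (Fin.ext hh)
      have : (i : ℕ) = 0 := by rw [← h2]; simp
      omega
    have hqb : q ≠ b := by
      intro hh
      have h2 : (0 : Fin n) = i := θ.symm.injective (Fin.ext hh)
      have : (i : ℕ) = 0 := by rw [← h2]; simp
      omega
    have e1 := face_zero_exist σ i hi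
    rw [← hp, ← ha] at e1
    set r := (if p < a then p else p - 1) with hr
    have hrn : r + 1 < n := by rw [hr]; split <;> omega
    have e2 : dFaceFun n θ i r = 0 := by rw [← h i r (by omega)]; exact e1
    have e3 := face_zero_unique θ i hi r hrn e2
    rw [← hq, ← hb] at e3
    rw [hr] at e3
    revert e3
    split <;> split <;> intro e3 <;> omega
  have hp0 : p = 0 := by
    by_contra hp0
    set i₁ := σ (0 : Fin n) with hi₁
    have hi₁v : 0 < (i₁ : ℕ) := by
      rcases Nat.eq_zero_or_pos (i₁ : ℕ) with h0 | h0
      · exfalso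
        have h1 : σ (0 : Fin n) = 0 := by rw [← hi₁]; exact Fin.ext (by simpa using h0)
        have h2 : (σ.symm 0 : Fin n) = 0 := by
          have h3 := congrArg σ.symm h1
          rw [Equiv.symm_apply_apply] at h3
          exact h3.symm
        have : p = 0 := by rw [hp, h2]; simp
        omega
      · exact h0
    have hc := (claim i₁ hi₁v).1
    have : ((σ.symm i₁ : Fin n) : ℕ) = 0 := by rw [hi₁, Equiv.symm_apply_apply]; simp
    omega
  have w1 : (1 : ℕ) < n := by omega
  have w2 : (2 : ℕ) < n := by omega
  have h1 := claim ⟨1, w1⟩ (by norm_num)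
  have h2 := claim ⟨2, w2⟩ (by norm_num)
  have hb1 : ((θ.symm ⟨1, w1⟩ : Fin n) : ℕ) = 0 := by
    have := h1.2.1; omega
  have hb2 : ((θ.symm ⟨2, w2⟩ : Fin n) : ℕ) = 0 := by
    have := h2.2.1; omega
  have heq12 : (⟨1, w1⟩ : Fin n) = (⟨2, w2⟩ : Fin n) :=
    θ.symm.injective (Fin.ext (by rw [hb1, hb2]))
  exact absurd (congrArg Fin.val heq12) (by norm_num)

lemma face0_lt' (σ : Equiv.Perm (Fin n)) (k : Fin n) (hk1 : (k : ℕ) + 1 < n)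
    (hka : (k : ℕ) < ((σ.symm 0 : Fin n) : ℕ)) :
    dFaceFun n σ 0 (k : ℕ) = ((σ k : Fin n) : ℕ) - 1 := by
  unfold dFaceFun
  rw [dif_pos hk1, if_pos hka, if_neg (by simp)]

lemma face0_ge' (σ : Equiv.Perm (Fin n)) (k : Fin n) (hk : 0 < (k : ℕ))
    (hka : ¬ ((k : ℕ) - 1) < ((σ.symm 0 : Fin n) : ℕ)) :
    dFaceFun n σ 0 ((k : ℕ) - 1) = ((σ k : Fin n) : ℕ) - 1 := by
  have hkn : (k : ℕ) < n := k.isLt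
  unfold dFaceFun
  rw [dif_pos (by omega : (k : ℕ) - 1 + 1 < n), if_neg hka, if_neg (by simp)]
  have he : (⟨(k : ℕ) - 1 + 1, by omega⟩ : Fin n) = k :=
    Fin.ext (show (k : ℕ) - 1 + 1 = (k : ℕ) by omega)
  rw [he]

lemma agree (hn : 3 ≤ n) (σ θ : Equiv.Perm (Fin n))
    (heq : ((σ.symm 0 : Fin n) : ℕ) = ((θ.symm 0 : Fin n) : ℕ))
    (h : ∀ j : ℕ, j < n - 1 → dFaceFun n σ 0 j = dFaceFun n θ 0 j) : σ = θ := by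
  set p := ((σ.symm 0 : Fin n) : ℕ) with hp
  have hp' : p < n := (σ.symm 0).isLt
  apply Equiv.ext
  intro k
  have hkn : (k : ℕ) < n := k.isLt
  rcases lt_trichotomy ((k : ℕ)) p with hk | hk | hk
  · have hj := h (k : ℕ) (by omega)
    rw [face0_lt' σ k (by omega) (by omega),
        face0_lt' θ k (by omega) (by omega)] at hj
    have n1 := val_pos σ k (by omega)
    have n2 := val_pos θ k (by omega)
    exact Fin.ext (by omega)
  · have hk1 : k = σ.symm 0 := Fin.ext hk
    have hk2 : k = θ.symm 0 := Fin.ext (by omega)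
    have e1 : σ k = 0 := by rw [hk1, Equiv.apply_symm_apply]
    have e2 : θ k = 0 := by rw [hk2, Equiv.apply_symm_apply]
    rw [e1, e2]
  · have hj := h ((k : ℕ) - 1) (by omega)
    rw [face0_ge' σ k (by omega) (by omega),
        face0_ge' θ k (by omega) (by omega)] at hj
    have n1 := val_pos σ k (by omega)
    have n2 := val_pos θ k (by omega)
    exact Fin.ext (by omega)

end aux

/-- Let n ≥ 3, and let σ and θ be permutations of {1, …, n} such that
d_iσ = d_iθ for all i ∈ {1, …, n}. Then σ = θ. -/
theorem statement4 (n : ℕ) (hn : 3 ≤ n) (σ θ : Equiv.Perm (Fin n))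
    (h : ∀ i : Fin n, ∀ j : ℕ, j < n - 1 → dFaceFun n σ i j = dFaceFun n θ i j) :
    σ = θ := by
  haveI : NeZero n := ⟨by omega⟩
  have h' : ∀ i : Fin n, ∀ j : ℕ, j < n - 1 → dFaceFun n θ i j = dFaceFun n σ i j :=
    fun i j hj => (h i j hj).symm
  have hpq : ((σ.symm 0 : Fin n) : ℕ) = ((θ.symm 0 : Fin n) : ℕ) :=
    le_antisymm (not_lt.mp (pos_not_lt hn θ σ h')) (not_lt.mp (pos_not_lt hn σ θ h))
  exact agree hn σ θ hpq (fun j hj => h 0 j hj)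
end

section
/- Let n ≥ 1, let θ be a permutation of {1, …, n}, let i ∈ {1, …, n}, and let k ∈ {0, 1}. Then δᵏ_{θ⁻¹(i)} ∘ t_{d_iθ} = t_θ ∘ δᵏ_i as maps [0,1]^{n−1} → [0,1]ⁿ. -/
/-- The `i`-th face `d_iθ ∈ S_{n-1}` of a permutation `θ ∈ S_n`, in 0-based
indexing (`Fin n` plays the role of `{1, …, n}`).  It is obtained by deleting
the position `θ⁻¹(i)` from the domain and the value `i` from the codomain of
`θ`; explicitly, it is the permutation of `{0, …, n-2}` given by the formula
`d_iθ(j) = θ(j)` if `j < θ⁻¹(i)` and `θ(j) < i`; `d_iθ(j) = θ(j) − 1` if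
`j < θ⁻¹(i)` and `θ(j) > i`; `d_iθ(j) = θ(j+1)` if `j ≥ θ⁻¹(i)` and
`θ(j+1) < i`; `d_iθ(j) = θ(j+1) − 1` if `j ≥ θ⁻¹(i)` and `θ(j+1) > i`. -/
def permFace : {n : ℕ} → Equiv.Perm (Fin n) → Fin n → Equiv.Perm (Fin (n - 1))
  | 0, _, i => i.elim0
  | _ + 1, θ, i =>
      Equiv.removeNone ((finSuccEquiv' (θ.symm i)).symm.trans (θ.trans (finSuccEquiv' i)))

/-- The permutation map `t_θ : [0,1]ⁿ → [0,1]ⁿ`, `t_θ(u₁, …, uₙ) = (u_{θ(1)}, …, u_{θ(n)})`,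
where `[0,1]ⁿ` is modeled as `Fin n → unitInterval`. -/
def permMap {n : ℕ} (θ : Equiv.Perm (Fin n)) (u : Fin n → unitInterval) :
    Fin n → unitInterval :=
  fun j => u (θ j)

/-- The coface map `δᵏ_i : [0,1]^{n-1} → [0,1]ⁿ`,
`δᵏ_i(u₁, …, u_{n−1}) = (u₁, …, u_{i−1}, k, u_i, …, u_{n−1})`, inserting the
value `k` at position `i` (in 0-based indexing, `Fin.insertNth`). -/
def cofaceMap {n : ℕ} (k : unitInterval) (i : Fin (n + 1))
    (u : Fin n → unitInterval) : Fin (n + 1) → unitInterval :=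
  Fin.insertNth i k u

/-- Let n ≥ 1, let θ be a permutation of {1, …, n}, let
i ∈ {1, …, n}, and let k ∈ {0, 1}. Then δᵏ_{θ⁻¹(i)} ∘ t_{d_iθ} = t_θ ∘ δᵏ_i as
maps [0,1]^{n−1} → [0,1]ⁿ.  (Here the case `n ≥ 1` is realized by replacing `n`
with `n + 1` for an arbitrary natural number `n`.) -/
theorem statement7 (n : ℕ) (θ : Equiv.Perm (Fin (n + 1))) (i : Fin (n + 1))
    (k : unitInterval) (hk : k = 0 ∨ k = 1) :
    (cofaceMap k (θ.symm i)) ∘ (permMap (permFace θ i)) =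
      (permMap θ) ∘ (cofaceMap k i) := by
  funext u
  funext j
  simp only [Function.comp_apply, cofaceMap, permMap]
  by_cases hj : j = θ.symm i
  · subst hj
    rw [Fin.insertNth_apply_same]
    rw [Equiv.apply_symm_apply, Fin.insertNth_apply_same]
  · obtain ⟨m, rfl⟩ := Fin.exists_succAbove_eq hj
    rw [Fin.insertNth_apply_succAbove]
    have hne : θ ((θ.symm i).succAbove m) ≠ i := by
      intro h
      apply hj
      have := congrArg θ.symm h
      rwa [Equiv.symm_apply_apply] at this
    obtain ⟨m', hm'⟩ := Fin.exists_succAbove_eq hne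
    rw [← hm', Fin.insertNth_apply_succAbove]
    show u (Equiv.removeNone ((finSuccEquiv' (θ.symm i)).symm.trans (θ.trans (finSuccEquiv' i))) m) = u m'
    congr 1
    show Equiv.removeNone ((finSuccEquiv' (θ.symm i)).symm.trans (θ.trans (finSuccEquiv' i))) m = m'
    have h : ((finSuccEquiv' (θ.symm i)).symm.trans (θ.trans (finSuccEquiv' i))) (some m) = some m' := by
      simp only [Equiv.trans_apply, finSuccEquiv'_symm_some, Equiv.coe_trans, Function.comp_apply]
      rw [← hm', finSuccEquiv'_succAbove]
    have := Equiv.removeNone_some ((finSuccEquiv' (θ.symm i)).symm.trans (θ.trans (finSuccEquiv' i))) ⟨m', h⟩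
    rw [h] at this
    exact Option.some_injective _ this
end

section
/- Let n ≥ 1, and let σ and θ be permutations of {1, …, n} such that d_iσ = d_iθ for all i ∈ {1, …, n} and such that σ(r) = θ(r) for some r ∈ {1, …, n}. Then σ = θ. -/
set_option maxHeartbeats 2000000


/-- Let n ≥ 1, and let σ and θ be permutations of {1, …, n} such
that d_iσ = d_iθ for all i ∈ {1, …, n} and such that σ(r) = θ(r) for some
r ∈ {1, …, n}. Then σ = θ. -/
theorem statement11 (n : ℕ) (hn : 1 ≤ n) (σ θ : Equiv.Perm (Fin n))
    (h : ∀ i : Fin n, ∀ j : ℕ, j < n - 1 → dFaceFun n σ i j = dFaceFun n θ i j)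
    (hr : ∃ r : Fin n, σ r = θ r) :
    σ = θ := by
  have key : ∀ j : ℕ, ∀ hj : j + 1 < n,
      ((σ ⟨j, by omega⟩ : Fin n) = θ ⟨j, by omega⟩ ↔
        σ ⟨j+1, hj⟩ = θ ⟨j+1, hj⟩) := by
    intro j hj
    constructor
    · intro heq
      have hh := h (σ ⟨j, by omega⟩) j (by omega)
      have hs : σ.symm (σ ⟨j, by omega⟩) = ⟨j, by omega⟩ := Equiv.symm_apply_apply _ _
      have ht : θ.symm (σ ⟨j, by omega⟩) = ⟨j, by omega⟩ := by
        rw [heq]; exact Equiv.symm_apply_apply _ _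
      simp only [dFaceFun, dif_pos hj, hs, ht, lt_irrefl, if_false] at hh
      have h1 : (σ ⟨j+1, hj⟩ : ℕ) ≠ (σ ⟨j, by omega⟩ : ℕ) := by
        intro hc
        exact absurd (σ.injective (Fin.ext hc)) (by simp [Fin.ext_iff])
      have h2 : (θ ⟨j+1, hj⟩ : ℕ) ≠ (σ ⟨j, by omega⟩ : ℕ) := by
        rw [heq]
        intro hc
        exact absurd (θ.injective (Fin.ext hc)) (by simp [Fin.ext_iff])
      apply Fin.ext
      split_ifs at hh <;> omega
    · intro heq
      have hh := h (σ ⟨j+1, hj⟩) j (by omega)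
      have hs : σ.symm (σ ⟨j+1, hj⟩) = ⟨j+1, hj⟩ := Equiv.symm_apply_apply _ _
      have ht : θ.symm (σ ⟨j+1, hj⟩) = ⟨j+1, hj⟩ := by
        rw [heq]; exact Equiv.symm_apply_apply _ _
      have hlt : j < ((⟨j+1, hj⟩ : Fin n) : ℕ) := by simp
      simp only [dFaceFun, dif_pos hj, hs, ht, hlt, if_true] at hh
      have h1 : (σ ⟨j, by omega⟩ : ℕ) ≠ (σ ⟨j+1, hj⟩ : ℕ) := by
        intro hc
        exact absurd (σ.injective (Fin.ext hc)) (by simp [Fin.ext_iff])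
      have h2 : (θ ⟨j, by omega⟩ : ℕ) ≠ (σ ⟨j+1, hj⟩ : ℕ) := by
        rw [heq]
        intro hc
        exact absurd (θ.injective (Fin.ext hc)) (by simp [Fin.ext_iff])
      apply Fin.ext
      split_ifs at hh <;> omega
  obtain ⟨r, hr⟩ := hr
  have down : ∀ k : ℕ, k ≤ (r : ℕ) →
      (σ ⟨(r : ℕ) - k, by omega⟩ : Fin n) = θ ⟨(r : ℕ) - k, by omega⟩ := by
    intro k
    induction k with
    | zero =>
      intro _
      simpa using hr
    | succ k ih =>
      intro hk
      have hj : ((r : ℕ) - (k+1)) + 1 < n := by omega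
      apply (key ((r : ℕ) - (k+1)) hj).mpr
      have := ih (by omega)
      have he : (⟨(r : ℕ) - (k+1) + 1, hj⟩ : Fin n) = ⟨(r : ℕ) - k, by omega⟩ := by
        apply Fin.ext; simp; omega
      rw [he]
      exact this
  have zero : (σ ⟨0, by omega⟩ : Fin n) = θ ⟨0, by omega⟩ := by
    have := down (r : ℕ) le_rfl
    simpa using this
  have up : ∀ j : ℕ, ∀ hj : j < n, (σ ⟨j, hj⟩ : Fin n) = θ ⟨j, hj⟩ := by
    intro j
    induction j with
    | zero => intro _; exact zero
    | succ j ih =>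
      intro hj
      exact (key j hj).mp (ih (by omega))
  ext x
  have := up (x : ℕ) x.isLt
  simp only [Fin.eta] at this
  rw [this]
end
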